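/- arXiv:math/0702136 — 6 statements merged into one kernel-verified Lean document; each statement's English description precedes it below -/
import Mathlib

section
/- Let a > 0 and c ∈ ℝ, let q(x) = a(x−c)², let b = min_{x∈ℤ} q(x) and M = {x ∈ ℤ : q(x) = b}. Suppose q is perfect, i.e. whenever a' > 0, c' ∈ ℝ and r' > 0 satisfy a'(m−c')² = r' for every m ∈ M, there exists λ > 0 with a' = λa, c' = c and r' = λb. Then there exists k ∈ ℤ with c = k + 1/2; consequently M = {k, k+1} and b = a/4. (Up to isomorphism of ℤ and scaling, the only perfect affine quadratic lattice of rank 1 is Aff(ℤ, (x−1/2)²).) -/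
/-!
A perfect form has at least two minimal vectors: if `m₀` were the only one, moving the centre to
any `c' ∉ {c, m₀}` and taking `r' = a (m₀ - c')²` would give a second ellipsoid through `M`.
Two distinct minimal vectors are equidistant from `c`, so `c` is their midpoint; it is not an
integer `t` (then `q(t) = 0` and `t` would be the only minimal vector), hence `c = k + 1/2`.
Finally `(x - k - 1/2)² - 1/4 = (x - k)(x - k - 1)` gives `b = a/4` and `M = {k, k + 1}`.
-/

def IsPerfect (a c b : ℝ) : Prop :=
  ∀ (a' c' r' : ℝ), 0 < a' → 0 < r' →
    (∀ m : ℤ, a * ((m : ℝ) - c) ^ 2 = b → a' * ((m : ℝ) - c') ^ 2 = r') →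
    ∃ l : ℝ, 0 < l ∧ a' = l * a ∧ c' = c ∧ r' = l * b

theorem IsPerfect.exists_ne_minimal {a c b : ℝ} (h : IsPerfect a c b) (ha : 0 < a) (m₀ : ℤ) :
    ∃ m : ℤ, a * ((m : ℝ) - c) ^ 2 = b ∧ m ≠ m₀ := by
  by_contra! hunique
  set c' := max c m₀ + 1
  have hc : c < c' := (le_max_left _ _).trans_lt (lt_add_one _)
  have hm₀ : (m₀ : ℝ) < c' := (le_max_right _ _).trans_lt (lt_add_one _)
  obtain ⟨l, -, -, hc', -⟩ := h a c' (a * ((m₀ : ℝ) - c') ^ 2) ha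
    (mul_pos ha (sq_pos_of_neg (sub_neg.2 hm₀))) fun m hm => by rw [hunique m hm]
  exact hc.ne' hc'

theorem midpoint_eq_int_add_half {a c b : ℝ} (ha : 0 < a)
    (hb : ∀ x : ℤ, b ≤ a * ((x : ℝ) - c) ^ 2) {m n : ℤ} (hm : a * ((m : ℝ) - c) ^ 2 = b)
    (hn : a * ((n : ℝ) - c) ^ 2 = b) (hmn : m ≠ n) : ∃ k : ℤ, c = k + 1 / 2 := by
  have hmn' : (m : ℝ) - n ≠ 0 := sub_ne_zero.2 (Int.cast_injective.ne hmn)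
  have hsum : (m : ℝ) + n = 2 * c := by
    have : ((m : ℝ) - n) * ((m + n) - 2 * c) = 0 := by nlinarith
    linarith [(mul_eq_zero.1 this).resolve_left hmn']
  obtain ⟨t, ht | ht⟩ := Int.even_or_odd' (m + n)
  · have hct : c = t := by
      have : (m : ℝ) + n = 2 * t := by exact_mod_cast ht
      linarith
    subst hct
    have hb0 : b ≤ 0 := by simpa using hb t
    have hmt : ((m : ℝ) - t) ^ 2 = 0 := by nlinarith [sq_nonneg ((m : ℝ) - t)]
    have hnt : ((n : ℝ) - t) ^ 2 = 0 := by nlinarith [sq_nonneg ((n : ℝ) - t)]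
    rw [sq_eq_zero_iff, sub_eq_zero] at hmt hnt
    exact absurd (by exact_mod_cast hmt.trans hnt.symm) hmn
  · refine ⟨t, ?_⟩
    have : (m : ℝ) + n = 2 * t + 1 := by exact_mod_cast ht
    linarith

theorem sq_int_sub_half_sub_quarter (x k : ℤ) :
    ((x : ℝ) - (k + 1 / 2)) ^ 2 - 1 / 4 = (((x - k) * (x - k - 1) : ℤ) : ℝ) := by
  push_cast
  ring

theorem quarter_le_sq_int_sub_half (x k : ℤ) : 1 / 4 ≤ ((x : ℝ) - (k + 1 / 2)) ^ 2 := by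
  have hprod : (0 : ℤ) ≤ (x - k) * (x - k - 1) := by
    rcases le_or_gt (x - k) 0 with h | h <;> nlinarith
  rw [← sub_nonneg, sq_int_sub_half_sub_quarter]
  exact_mod_cast hprod

theorem sq_int_sub_half_eq_quarter_iff (x k : ℤ) :
    ((x : ℝ) - (k + 1 / 2)) ^ 2 = 1 / 4 ↔ x = k ∨ x = k + 1 := by
  rw [← sub_eq_zero, sq_int_sub_half_sub_quarter, Int.cast_eq_zero, mul_eq_zero]
  omega

/-- The only perfect affine quadratic lattice of rank 1, up to isomorphism and
scaling, is `Aff(ℤ, (x - 1/2)²)`: if `q(x) = a(x-c)²` with minimum `b` over `ℤ`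
attained on the set `M` of minimal vectors is perfect, then `c = k + 1/2` for
some integer `k`, `M = {k, k+1}` and `b = a/4`. -/
theorem stmt_0 (a c b : ℝ) (ha : 0 < a)
    (hb_lb : ∀ x : ℤ, b ≤ a * ((x : ℝ) - c) ^ 2)
    (hb_mem : ∃ x : ℤ, a * ((x : ℝ) - c) ^ 2 = b)
    (hperfect : ∀ (a' c' r' : ℝ), 0 < a' → 0 < r' →
      (∀ m : ℤ, a * ((m : ℝ) - c) ^ 2 = b → a' * ((m : ℝ) - c') ^ 2 = r') →
      ∃ l : ℝ, 0 < l ∧ a' = l * a ∧ c' = c ∧ r' = l * b) :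
    ∃ k : ℤ, c = (k : ℝ) + 1 / 2 ∧
      {x : ℤ | a * ((x : ℝ) - c) ^ 2 = b} = {k, k + 1} ∧ b = a / 4 := by
  obtain ⟨m₀, hm₀⟩ := hb_mem
  obtain ⟨m, hm, hne⟩ := IsPerfect.exists_ne_minimal hperfect ha m₀
  obtain ⟨k, rfl⟩ := midpoint_eq_int_add_half ha hb_lb hm hm₀ hne
  have hb : b = a / 4 := by
    refine le_antisymm ?_ ?_
    · have := hb_lb k
      rwa [show ((k : ℝ) - (k + 1 / 2)) ^ 2 = 1 / 4 by ring, mul_one_div] at this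
    · rw [← hm₀, ← mul_one_div a 4]
      exact mul_le_mul_of_nonneg_left (quarter_le_sq_int_sub_half m₀ k) ha.le
  refine ⟨k, rfl, ?_, hb⟩
  ext x
  rw [Set.mem_ofPred_eq, Set.mem_insert_iff, Set.mem_singleton_iff, hb, ← mul_one_div a 4,
    mul_right_inj' ha.ne', sq_int_sub_half_eq_quarter_iff]
end

section
/- Let n ≥ 2, let A be a real symmetric positive definite n×n matrix, c ∈ ℝⁿ, r > 0, and let S ⊆ ℤⁿ be a finite set with Q_A[v−c] = r for every v ∈ S, which is perfect in the sense that whenever A' is a real symmetric positive definite n×n matrix, c' ∈ ℝⁿ and r' > 0 satisfy Q_{A'}[v−c'] = r' for every v ∈ S, there exists λ > 0 with A' = λA, c' = c and r' = λr. Then there is no partition S = S₁ ⊔ S₂ into two nonempty sets together with affine subspaces L₁, L₂ of ℝⁿ such that L₁ ∩ L₂ = ∅, S₁ ⊆ L₁ and S₂ ⊆ L₂. (A perfect polytope of dimension n > 1 has lamina number greater than 2.) -/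
open Matrix

/-- Cast an integer vector to a real vector. -/
def vR {n : ℕ} (v : Fin n → ℤ) : Fin n → ℝ := fun i => (v i : ℝ)

/-- The quadratic form `Q_A[x] = xᵀ A x`. -/
def Qf {n : ℕ} (A : Matrix (Fin n) (Fin n) ℝ) (x : Fin n → ℝ) : ℝ :=
  x ⬝ᵥ A.mulVec x

/-!
If `S = S₁ ⊔ S₂` with `Sᵢ` in disjoint affine subspaces `Lᵢ`, some linear functional `x ↦ u ⬝ᵥ x`
takes a constant value `aᵢ` on `Lᵢ`, with `a₁ ≠ a₂`. Then `(u ⬝ᵥ x - a₁) (u ⬝ᵥ x - a₂)` vanishes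
on `S`, and adding it to `Q_A[x - c] - r` gives a second quadric through `S`, an ellipsoid with
form `A + u uᵀ`. Perfection forces `A + u uᵀ = l A`; testing on a nonzero `y ⊥ u`, which exists
because `n ≥ 2`, gives `l = 1` and hence `u = 0`, a contradiction.
-/

section Separation

variable {K V : Type*} [Field K] [AddCommGroup V] [Module K V]

theorem AffineSubspace.sub_notMem_direction_sup_of_disjoint {L₁ L₂ : AffineSubspace K V}
    {p₁ p₂ : V} (hp₁ : p₁ ∈ L₁) (hp₂ : p₂ ∈ L₂) (h : Disjoint (L₁ : Set V) L₂) :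
    p₂ - p₁ ∉ L₁.direction ⊔ L₂.direction := by
  intro hmem
  obtain ⟨w₁, hw₁, w₂, hw₂, hsum⟩ := Submodule.mem_sup.1 hmem
  have hq₁ : w₁ +ᵥ p₁ ∈ L₁ := AffineSubspace.vadd_mem_of_mem_direction hw₁ hp₁
  have hq₂ : -w₂ +ᵥ p₂ ∈ L₂ := AffineSubspace.vadd_mem_of_mem_direction (neg_mem hw₂) hp₂
  have hq : w₁ +ᵥ p₁ = -w₂ +ᵥ p₂ := by
    simp only [vadd_eq_add]
    linear_combination (norm := abel) hsum
  exact Set.disjoint_left.1 h hq₁ (hq ▸ hq₂)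

theorem AffineSubspace.exists_linearMap_eq_on_of_disjoint {L₁ L₂ : AffineSubspace K V}
    {p₁ p₂ : V} (hp₁ : p₁ ∈ L₁) (hp₂ : p₂ ∈ L₂) (h : Disjoint (L₁ : Set V) L₂) :
    ∃ f : V →ₗ[K] K, f p₁ ≠ f p₂ ∧ (∀ x ∈ L₁, f x = f p₁) ∧ ∀ x ∈ L₂, f x = f p₂ := by
  obtain ⟨f, hf, hker⟩ :=
    Submodule.exists_le_ker_of_notMem (sub_notMem_direction_sup_of_disjoint hp₁ hp₂ h)
  have hconst : ∀ {L : AffineSubspace K V} {p x : V}, L.direction ≤ L₁.direction ⊔ L₂.direction →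
      p ∈ L → x ∈ L → f x = f p := fun hL hp hx => by
    simpa [sub_eq_zero] using hker (hL (AffineSubspace.vsub_mem_direction hx hp))
  refine ⟨f, fun h₁₂ => hf ?_, fun x => hconst le_sup_left hp₁, fun x => hconst le_sup_right hp₂⟩
  rw [map_sub, h₁₂, sub_self]

end Separation

section QuadraticForm

variable {n : ℕ} {A : Matrix (Fin n) (Fin n) ℝ}

theorem Qf_pos (hA : A.PosDef) {x : Fin n → ℝ} (hx : x ≠ 0) : 0 < Qf A x := by
  simpa [Qf] using hA.dotProduct_mulVec_pos hx

theorem pos_of_Qf_sub_eq (hA : A.PosDef) {x y c : Fin n → ℝ} {r : ℝ} (hxy : x ≠ y)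
    (hx : Qf A (x - c) = r) (hy : Qf A (y - c) = r) : 0 < r := by
  by_cases hxc : x - c = 0
  · have hyc : y - c ≠ 0 := fun hyc => hxy (sub_eq_zero.1 hxc ▸ (sub_eq_zero.1 hyc).symm)
    exact hy ▸ Qf_pos hA hyc
  · exact hx ▸ Qf_pos hA hxc

theorem Qf_sub (hA : A.IsSymm) (x y : Fin n → ℝ) :
    Qf A (x - y) = Qf A x - 2 * (A *ᵥ y ⬝ᵥ x) + Qf A y := by
  have hyx : y ⬝ᵥ A *ᵥ x = A *ᵥ y ⬝ᵥ x := by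
    rw [dotProduct_mulVec, ← mulVec_transpose, hA]
  simp only [Qf, mulVec_sub, dotProduct_sub, sub_dotProduct, hyx, dotProduct_comm x (A *ᵥ y)]
  ring

theorem Qf_add_vecMulVec (u x : Fin n → ℝ) :
    Qf (A + vecMulVec u u) x = Qf A x + (u ⬝ᵥ x) ^ 2 := by
  rw [Qf, Qf, add_mulVec, dotProduct_add, vecMulVec_mulVec, dotProduct_smul, op_smul_eq_mul,
    dotProduct_comm x u, sq]

theorem Matrix.IsSymm.add_vecMulVec (hA : A.IsSymm) (u : Fin n → ℝ) :
    (A + vecMulVec u u).IsSymm :=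
  hA.add (transpose_vecMulVec u u)

theorem Matrix.PosDef.add_vecMulVec (hA : A.PosDef) (u : Fin n → ℝ) :
    (A + vecMulVec u u).PosDef := by
  simpa using hA.add_posSemidef (posSemidef_vecMulVec_self_star u)

/-- The centre `c'` solves `(A + u uᵀ) c' = A c + ((a₁ + a₂) / 2) u`, which matches the linear
terms of both sides. -/
theorem exists_center_Qf_add_vecMulVec (hA : A.IsSymm) (u : Fin n → ℝ)
    (hdet : IsUnit (A + vecMulVec u u).det) (c : Fin n → ℝ) (a₁ a₂ : ℝ) :
    ∃ (c' : Fin n → ℝ) (k : ℝ), ∀ x,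
      Qf (A + vecMulVec u u) (x - c') = Qf A (x - c) + (u ⬝ᵥ x - a₁) * (u ⬝ᵥ x - a₂) + k := by
  set b := A *ᵥ c + ((a₁ + a₂) / 2) • u
  set c' := (A + vecMulVec u u)⁻¹ *ᵥ b
  have hc' : (A + vecMulVec u u) *ᵥ c' = b := by
    rw [mulVec_mulVec, mul_nonsing_inv _ hdet, one_mulVec]
  refine ⟨c', Qf (A + vecMulVec u u) c' - Qf A c - a₁ * a₂, fun x => ?_⟩
  rw [Qf_sub (hA.add_vecMulVec u), Qf_sub hA, hc', Qf_add_vecMulVec]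
  simp only [b, add_dotProduct, smul_dotProduct, smul_eq_mul]
  ring

theorem eq_zero_of_add_vecMulVec_eq_smul (hn : 2 ≤ n) (hA : A.PosDef) {u : Fin n → ℝ} {l : ℝ}
    (h : A + vecMulVec u u = l • A) : u = 0 := by
  have : Nontrivial (Fin n) := Fin.nontrivial_iff_two_le.2 hn
  obtain ⟨y, hy, hyu⟩ := exists_ne_zero_dotProduct_eq_zero u
  have hl : l = 1 := by
    have hQ : l * Qf A y = Qf A y := by
      simpa [dotProduct_comm u y, hyu, h, Qf, smul_mulVec] using Qf_add_vecMulVec (A := A) u y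
    nlinarith [Qf_pos hA hy]
  rw [hl, one_smul, add_eq_left, vecMulVec_eq_zero] at h
  exact h.elim id id

end QuadraticForm

theorem stmt_3_general (n : ℕ) (hn : 2 ≤ n) (A : Matrix (Fin n) (Fin n) ℝ)
    (c : Fin n → ℝ) (r : ℝ) (S : Set (Fin n → ℤ))
    (hA : A.IsSymm) (hApd : A.PosDef)
    (honell : ∀ v ∈ S, Qf A (vR v - c) = r)
    (hperfect : ∀ (A' : Matrix (Fin n) (Fin n) ℝ) (c' : Fin n → ℝ) (r' : ℝ),
      A'.IsSymm → A'.PosDef → 0 < r' →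
      (∀ v ∈ S, Qf A' (vR v - c') = r') →
      ∃ l : ℝ, 0 < l ∧ A' = l • A ∧ c' = c ∧ r' = l * r) :
    ¬ ∃ (S₁ S₂ : Set (Fin n → ℤ)) (L₁ L₂ : AffineSubspace ℝ (Fin n → ℝ)),
      S₁.Nonempty ∧ S₂.Nonempty ∧ Disjoint S₁ S₂ ∧ S₁ ∪ S₂ = S ∧
      (L₁ : Set (Fin n → ℝ)) ∩ (L₂ : Set (Fin n → ℝ)) = ∅ ∧
      (∀ v ∈ S₁, vR v ∈ L₁) ∧ (∀ v ∈ S₂, vR v ∈ L₂) := by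
  rintro ⟨S₁, S₂, L₁, L₂, ⟨v₁, hv₁⟩, ⟨v₂, hv₂⟩, -, rfl, hL, hL₁, hL₂⟩
  obtain ⟨f, hf, hfL₁, hfL₂⟩ := AffineSubspace.exists_linearMap_eq_on_of_disjoint
    (hL₁ v₁ hv₁) (hL₂ v₂ hv₂) (Set.disjoint_iff_inter_eq_empty.2 hL)
  set u := (dotProductEquiv ℝ (Fin n)).symm f
  have hu : ∀ x, f x = u ⬝ᵥ x := fun x =>
    (LinearMap.congr_fun ((dotProductEquiv ℝ (Fin n)).apply_symm_apply f) x).symm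
  have hA'pd := hApd.add_vecMulVec u
  obtain ⟨c', k, hk⟩ := exists_center_Qf_add_vecMulVec hA u hA'pd.det_pos.ne'.isUnit c
    (f (vR v₁)) (f (vR v₂))
  have honell' : ∀ v ∈ S₁ ∪ S₂, Qf (A + vecMulVec u u) (vR v - c') = r + k := by
    intro v hv
    rw [hk, honell v hv, ← hu]
    rcases hv with hv | hv
    · simp [hfL₁ _ (hL₁ v hv)]
    · simp [hfL₂ _ (hL₂ v hv)]
  have hv₁₂ : vR v₁ ≠ vR v₂ := fun h => hf (congrArg f h)
  have hr' : 0 < r + k :=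
    pos_of_Qf_sub_eq hA'pd hv₁₂ (honell' v₁ (.inl hv₁)) (honell' v₂ (.inr hv₂))
  obtain ⟨l, -, hl, -, -⟩ := hperfect _ c' _ (hA.add_vecMulVec u) hA'pd hr' honell'
  have hu0 : u = 0 := eq_zero_of_add_vecMulVec_eq_smul hn hApd hl
  exact hf (by rw [hu, hu, hu0, zero_dotProduct, zero_dotProduct])

/-- A perfect point set of dimension `n ≥ 2` cannot be split into two nonempty
parts lying in two disjoint affine subspaces: its lamina number exceeds 2. -/
theorem stmt_3 (n : ℕ) (hn : 2 ≤ n) (A : Matrix (Fin n) (Fin n) ℝ)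
    (c : Fin n → ℝ) (r : ℝ) (S : Set (Fin n → ℤ))
    (hA : A.IsSymm) (hApd : A.PosDef) (hr : 0 < r) (hS : S.Finite)
    (honell : ∀ v ∈ S, Qf A (vR v - c) = r)
    (hperfect : ∀ (A' : Matrix (Fin n) (Fin n) ℝ) (c' : Fin n → ℝ) (r' : ℝ),
      A'.IsSymm → A'.PosDef → 0 < r' →
      (∀ v ∈ S, Qf A' (vR v - c') = r') →
      ∃ l : ℝ, 0 < l ∧ A' = l • A ∧ c' = c ∧ r' = l * r) :
    ¬ ∃ (S₁ S₂ : Set (Fin n → ℤ)) (L₁ L₂ : AffineSubspace ℝ (Fin n → ℝ)),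
      S₁.Nonempty ∧ S₂.Nonempty ∧ Disjoint S₁ S₂ ∧ S₁ ∪ S₂ = S ∧
      (L₁ : Set (Fin n → ℝ)) ∩ (L₂ : Set (Fin n → ℝ)) = ∅ ∧
      (∀ v ∈ S₁, vR v ∈ L₁) ∧ (∀ v ∈ S₂, vR v ∈ L₂) :=
  stmt_3_general n hn A c r S hA hApd honell hperfect
end

section
/- For all distinct u, v ∈ S₆ one has Q_{E6}[u−v] ∈ {2, 4}, and both values are attained; that is, the Gosset polytope G₆ is a two-distance set with norm spectrum Spec(G₆) = {2,4} with respect to the form E6. -/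
/-!
The permutations of the first five coordinates preserve `Q = Q_{E6}` and the centre `c6`, so
checking one representative of each of the six orbits shows that all of `S6` lies on the
ellipsoid `Q (x - c6) = 4/3`. By the parallelogram law,
`Q (u - v) ≤ 2 Q (u - c6) + 2 Q (v - c6) = 16/3` for `u, v ∈ S6`. On the other hand `E6` is an
integral symmetric matrix with even diagonal, so `Q (u - v)` is an even integer, and it is
positive for `u ≠ v` because `Q` is the sum of squares
`Q (y, t) = ∑ i, (y i + t / 2) ^ 2 + 3 (∑ i, y i + 3 t / 2) ^ 2`.
Hence `Q (u - v) ∈ {2, 4}`.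
-/

open Matrix

/-- The Gram matrix of type `E₆` used in the paper. -/
def E6 : Matrix (Fin 6) (Fin 6) ℝ :=
  !![4, 3, 3, 3, 3, 5;
     3, 4, 3, 3, 3, 5;
     3, 3, 4, 3, 3, 5;
     3, 3, 3, 4, 3, 5;
     3, 3, 3, 3, 4, 5;
     5, 5, 5, 5, 5, 8]

/-- The center of the Delaunay ellipsoid of the Gosset polytope `G₆`. -/
noncomputable def c6 : Fin 6 → ℝ := ![1/3, 1/3, 1/3, 1/3, 1/3, -2/3]

/-- The 27 vertices of the Gosset polytope `G₆` in `ℤ⁶`. -/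
def S6 : Set (Fin 6 → ℤ) :=
  {Fin.snoc ![1, 1, 1, 1, 1] (-3)} ∪
  {v | ∃ σ : Equiv.Perm (Fin 5), v = Fin.snoc (![0, 1, 1, 1, 1] ∘ σ) (-2)} ∪
  {v | ∃ σ : Equiv.Perm (Fin 5), v = Fin.snoc (![1, 1, 0, 0, 0] ∘ σ) (-1)} ∪
  {0} ∪
  {v | ∃ σ : Equiv.Perm (Fin 5), v = Fin.snoc (![1, 0, 0, 0, 0] ∘ σ) 0} ∪
  {v | ∃ σ : Equiv.Perm (Fin 5), v = Fin.snoc (![-1, 0, 0, 0, 0] ∘ σ) 1}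

lemma vR_injective {n : ℕ} : Function.Injective (vR (n := n)) := fun u v h =>
  funext fun i => by simpa [vR] using congrFun h i

lemma vR_sub {n : ℕ} (u v : Fin n → ℤ) : vR (u - v) = vR u - vR v := by
  funext i; simp [vR]

lemma Qf_map_intCast {n : ℕ} (A : Matrix (Fin n) (Fin n) ℤ) (x : Fin n → ℤ) :
    Qf (A.map (↑)) (vR x) = ((x ⬝ᵥ A *ᵥ x : ℤ) : ℝ) := by
  simp [Qf, vR, dotProduct, mulVec]

lemma Qf_sub_add_Qf_add {n : ℕ} (A : Matrix (Fin n) (Fin n) ℝ) (x y : Fin n → ℝ) :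
    Qf A (x - y) + Qf A (x + y) = 2 * Qf A x + 2 * Qf A y := by
  simp only [Qf, mulVec_sub, mulVec_add, dotProduct_sub, dotProduct_add, sub_dotProduct,
    add_dotProduct]
  ring

lemma Qf_sub_le {n : ℕ} {A : Matrix (Fin n) (Fin n) ℝ} (hA : ∀ x, 0 ≤ Qf A x)
    (x y : Fin n → ℝ) : Qf A (x - y) ≤ 2 * Qf A x + 2 * Qf A y := by
  linarith [Qf_sub_add_Qf_add A x y, hA (x + y)]

lemma even_dotProduct_mulVec_self {ι : Type*} [Fintype ι] [LinearOrder ι]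
    (A : Matrix ι ι ℤ) (hA : A.IsSymm) (hdiag : ∀ i, Even (A i i)) (x : ι → ℤ) :
    Even (x ⬝ᵥ A *ᵥ x) := by
  set B : Matrix ι ι ℤ := .of fun i j => if j < i then A i j else if i = j then A i i / 2 else 0
  have hB : A = B + Bᵀ := by
    ext i j
    simp only [B, Matrix.add_apply, transpose_apply, of_apply]
    rcases lt_trichotomy i j with h | rfl | h
    · simp [h, h.ne, not_lt_of_gt h, ← hA.apply i j]
    · obtain ⟨k, hk⟩ := hdiag i
      simp only [lt_irrefl, if_false, if_true, hk]
      omega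
    · simp [h, h.ne, not_lt_of_gt h]
  rw [hB, add_mulVec, dotProduct_add, mulVec_transpose, dotProduct_comm x (x ᵥ* B),
    ← dotProduct_mulVec]
  exact Even.add_self _

def E6Int : Matrix (Fin 6) (Fin 6) ℤ :=
  !![4, 3, 3, 3, 3, 5;
     3, 4, 3, 3, 3, 5;
     3, 3, 4, 3, 3, 5;
     3, 3, 3, 4, 3, 5;
     3, 3, 3, 3, 4, 5;
     5, 5, 5, 5, 5, 8]

lemma E6_eq_map : E6 = E6Int.map (↑) := by
  ext i j; fin_cases i <;> fin_cases j <;> simp [E6, E6Int]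

lemma E6Int_isSymm : E6Int.IsSymm := by
  unfold IsSymm; decide

lemma even_E6Int_diag (i : Fin 6) : Even (E6Int i i) := by
  fin_cases i <;> decide

lemma Qf_E6_snoc (y : Fin 5 → ℝ) (t : ℝ) :
    Qf E6 (Fin.snoc y t) = ∑ i, (y i + t / 2) ^ 2 + 3 * (∑ i, y i + 3 / 2 * t) ^ 2 := by
  have hlast : Fin.snoc (α := fun _ => ℝ) y t 5 = t := Fin.snoc_last (α := fun _ => ℝ) _ _
  simp [Qf, E6, dotProduct, mulVec, Fin.sum_univ_castSucc, hlast]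
  ring

lemma Qf_E6_nonneg (x : Fin 6 → ℝ) : 0 ≤ Qf E6 x := by
  rw [← Fin.snoc_init_self x, Qf_E6_snoc]
  positivity

lemma Qf_E6_pos {x : Fin 6 → ℝ} (hx : x ≠ 0) : 0 < Qf E6 x := by
  refine (Qf_E6_nonneg x).lt_of_ne fun h => hx ?_
  rw [← Fin.snoc_init_self x, Qf_E6_snoc] at h
  set y := Fin.init x
  set t := x (Fin.last 5)
  have hsq := (add_eq_zero_iff_of_nonneg (by positivity) (by positivity)).1 h.symm
  have hy : ∀ i, y i = -(t / 2) := fun i => by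
    have := (Finset.sum_eq_zero_iff_of_nonneg fun i _ => sq_nonneg (y i + t / 2)).1 hsq.1 i
      (Finset.mem_univ i)
    linarith [pow_eq_zero_iff (n := 2) two_ne_zero |>.1 this]
  have ht : t = 0 := by
    have : ∑ i, y i + 3 / 2 * t = 0 := by nlinarith [hsq.2]
    simp only [hy, Finset.sum_const, Finset.card_univ, Fintype.card_fin, nsmul_eq_mul] at this
    linarith
  funext i
  refine Fin.lastCases ht (fun i => ?_) i
  exact (hy i).trans (by simp [ht])

lemma vR_snoc_sub_c6 (a : Fin 5 → ℤ) (t : ℤ) :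
    vR (Fin.snoc a t : Fin 6 → ℤ) - c6 =
      Fin.snoc (fun i => (a i : ℝ) - 1 / 3) ((t : ℝ) + 2 / 3) := by
  funext i
  refine Fin.lastCases ?_ (fun i => ?_) i
  · simp only [Pi.sub_apply, vR, Fin.snoc_last]
    simp [c6]
    ring
  · simp only [Pi.sub_apply, vR, Fin.snoc_castSucc]
    fin_cases i <;> simp [c6]

lemma Qf_E6_snoc_comp_perm (y : Fin 5 → ℝ) (σ : Equiv.Perm (Fin 5)) (t : ℝ) :
    Qf E6 (Fin.snoc (y ∘ σ) t) = Qf E6 (Fin.snoc y t) := by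
  simp only [Qf_E6_snoc, Function.comp_apply, Equiv.sum_comp σ (fun i => (y i + t / 2) ^ 2),
    Equiv.sum_comp σ y]

lemma Qf_E6_vR_snoc_comp_perm_sub_c6 (a : Fin 5 → ℤ) (σ : Equiv.Perm (Fin 5)) (t : ℤ) :
    Qf E6 (vR (Fin.snoc (a ∘ σ) t : Fin 6 → ℤ) - c6) =
      Qf E6 (vR (Fin.snoc a t : Fin 6 → ℤ) - c6) := by
  rw [vR_snoc_sub_c6, vR_snoc_sub_c6]
  exact Qf_E6_snoc_comp_perm (fun i => (a i : ℝ) - 1 / 3) σ _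

lemma Qf_E6_sub_c6_of_mem_S6 {v : Fin 6 → ℤ} (hv : v ∈ S6) : Qf E6 (vR v - c6) = 4 / 3 := by
  rcases hv with
    (((((rfl | ⟨σ, rfl⟩) | ⟨σ, rfl⟩) | rfl) | ⟨σ, rfl⟩) | ⟨σ, rfl⟩) <;>
    try rw [Qf_E6_vR_snoc_comp_perm_sub_c6]
  all_goals norm_num [Qf, E6, c6, vR, dotProduct, mulVec, Fin.sum_univ_succ]

lemma Qf_E6_sub_eq_two_or_four {u v : Fin 6 → ℤ} (hu : u ∈ S6) (hv : v ∈ S6)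
    (huv : u ≠ v) :
    Qf E6 (vR u - vR v) = 2 ∨ Qf E6 (vR u - vR v) = 4 := by
  obtain ⟨k, hk⟩ := even_dotProduct_mulVec_self E6Int E6Int_isSymm even_E6Int_diag (u - v)
  have hcast : Qf E6 (vR u - vR v) = 2 * k := by
    rw [← vR_sub, E6_eq_map, Qf_map_intCast, hk]
    push_cast; ring
  have hpos : 0 < Qf E6 (vR u - vR v) := Qf_E6_pos (sub_ne_zero.2 (vR_injective.ne huv))
  have hle : Qf E6 (vR u - vR v) ≤ 16 / 3 :=
    calc Qf E6 (vR u - vR v) = Qf E6 ((vR u - c6) - (vR v - c6)) := by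
          rw [sub_sub_sub_cancel_right]
      _ ≤ 2 * Qf E6 (vR u - c6) + 2 * Qf E6 (vR v - c6) := Qf_sub_le Qf_E6_nonneg _ _
      _ = 16 / 3 := by rw [Qf_E6_sub_c6_of_mem_S6 hu, Qf_E6_sub_c6_of_mem_S6 hv]; norm_num
  rw [hcast] at hpos hle ⊢
  have hk1 : 0 < k := by exact_mod_cast (by linarith : (0 : ℝ) < k)
  have hk2 : k < 3 := by exact_mod_cast (by linarith : (k : ℝ) < 3)
  interval_cases k <;> norm_num

/-- The Gosset polytope `G₆` is a two-distance set with norm spectrum `{2, 4}`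
with respect to the form `E₆`. -/
theorem stmt_6 :
    (∀ u ∈ S6, ∀ v ∈ S6, u ≠ v → Qf E6 (vR u - vR v) ∈ ({2, 4} : Set ℝ)) ∧
    (∃ u ∈ S6, ∃ v ∈ S6, u ≠ v ∧ Qf E6 (vR u - vR v) = 2) ∧
    (∃ u ∈ S6, ∃ v ∈ S6, u ≠ v ∧ Qf E6 (vR u - vR v) = 4) := by
  have he₀ : (Fin.snoc (![1, 0, 0, 0, 0] ∘ Equiv.refl _) 0 : Fin 6 → ℤ) ∈ S6 :=
    Or.inl (Or.inr ⟨_, rfl⟩)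
  have he₁ : (Fin.snoc (![1, 0, 0, 0, 0] ∘ Equiv.swap 0 1) 0 : Fin 6 → ℤ) ∈ S6 :=
    Or.inl (Or.inr ⟨_, rfl⟩)
  have h0 : (0 : Fin 6 → ℤ) ∈ S6 := Or.inl (Or.inl (Or.inr rfl))
  refine ⟨fun u hu v hv huv => Qf_E6_sub_eq_two_or_four hu hv huv,
    ⟨_, he₀, _, he₁, by decide, ?_⟩, ⟨_, he₀, _, h0, by decide, ?_⟩⟩ <;>
    norm_num [Qf, E6, vR, dotProduct, mulVec, Fin.sum_univ_succ, Equiv.swap_apply_def]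
end

section
/- Let V ⊆ ℝ⁷ be the set of all cyclic coordinate shifts of the vectors (ε₁, ε₂, 0, ε₃, 0, 0, 0) with ε₁, ε₂, ε₃ ∈ {−1, 1}. Then |V| = 56, and with respect to the standard Euclidean norm: (a) V₊ = {v ∈ V : v₁ = 1} has exactly 12 elements; for every p ∈ V₊, ‖p − e₁‖² = 2 and 2e₁ − p ∈ V₊; and for all p, q ∈ V₊ with q ≠ p and q ≠ 2e₁ − p one has ‖p − q‖² = 4 (so V₊ is the vertex set of a regular 6-dimensional cross-polytope centered at e₁); the analogous statements hold for V₋ = {v ∈ V : v₁ = −1} with center −e₁; (b) V₀ = {v ∈ V : v₁ = 0} has exactly 32 elements and there is a bijection f from V₀ onto the even half-cube {u ∈ {0,1}⁶ : u₁+⋯+u₆ even} such that ‖p − q‖² = 2‖f(p) − f(q)‖² for all p, q ∈ V₀ (so V₀ is similar to the vertex set of a 6-half-cube). In particular V is partitioned by the three parallel hyperplanes x₁ = −1, x₁ = 0, x₁ = 1, so the lamina number of V is at most 3. -/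
/-- Du Val's 56-point set: all cyclic coordinate shifts of the vectors
`(ε₁, ε₂, 0, ε₃, 0, 0, 0)` with `ε₁, ε₂, ε₃ ∈ {-1, 1}`. -/
def duValV : Set (Fin 7 → ℝ) :=
  {v | ∃ e1 e2 e3 : ℝ, (e1 = 1 ∨ e1 = -1) ∧ (e2 = 1 ∨ e2 = -1) ∧ (e3 = 1 ∨ e3 = -1) ∧
    ∃ k : Fin 7, ∀ i : Fin 7, v i = ![e1, e2, 0, e3, 0, 0, 0] (i - k)}

/-- The squared Euclidean norm on `ℝ⁷`. -/
def sq7 (x : Fin 7 → ℝ) : ℝ := ∑ i, (x i) ^ 2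

/-- The first standard basis vector of `ℝ⁷`. -/
def e1v : Fin 7 → ℝ := fun i => if i = 0 then 1 else 0

/-!
Every point of `duValV` is the real image of an integer vector, and the integer model is an
explicit finite set of 56 vectors. All finite facts (cardinalities of the layers, the
cross-polytope distances, the image of the middle layer) are therefore checked by `decide`
over `ℤ` and transported to `ℝ` along the injective ring map `ℤ → ℝ`, which commutes with sums
of squares.

On the middle layer the coordinates pair up as `(1, 3), (2, 6), (4, 5)` (indices from `0`), each
pair containing exactly one nonzero coordinate; the half-cube coordinates are the numbers
`(1 + v a ± v b) / 2`, which are therefore `0` or `1`. Since `(s, t) ↦ (s + t, s - t)` doubles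
squared lengths, this affine map halves squared distances, which also makes it injective.
-/

open Finset

section CrossPolytope

variable {n R R' : Type*} [Fintype n] [CommRing R] [CommRing R']

def IsCrossPolytopeVertices (S : Set (n → R)) (c : n → R) : Prop :=
  (∀ p ∈ S, ∑ i, (p - c) i ^ 2 = 2 ∧ (2 : R) • c - p ∈ S) ∧
    ∀ p ∈ S, ∀ q ∈ S, q ≠ p → q ≠ (2 : R) • c - p → ∑ i, (p - q) i ^ 2 = 4

theorem IsCrossPolytopeVertices.image {S : Set (n → R)} {c : n → R}
    (h : IsCrossPolytopeVertices S c) (f : R →+* R') :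
    IsCrossPolytopeVertices ((f ∘ ·) '' S) (f ∘ c) := by
  have map_reflect (x : n → R) :
      (2 : R') • (f ∘ c) - f ∘ x = f ∘ ((2 : R) • c - x) := by
    ext i
    simp [map_ofNat]
  refine ⟨?_, ?_⟩
  · rintro _ ⟨x, hx, rfl⟩
    obtain ⟨hnorm, hmem⟩ := h.1 x hx
    refine ⟨?_, map_reflect x ▸ Set.mem_image_of_mem _ hmem⟩
    simpa [← map_sub, ← map_pow, ← map_sum, map_ofNat] using congrArg f hnorm
  · rintro _ ⟨x, hx, rfl⟩ _ ⟨y, hy, rfl⟩ hne hne'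
    rw [map_reflect] at hne'
    have hdist := h.2 x hx y hy (fun hyx => hne (hyx ▸ rfl)) (fun hyx => hne' (hyx ▸ rfl))
    simpa [← map_sub, ← map_pow, ← map_sum, map_ofNat] using congrArg f hdist

end CrossPolytope

section IntegerModel

def duValPoint {R : Type*} [Zero R] (a b c : R) (k : Fin 7) : Fin 7 → R :=
  fun i => ![a, b, 0, c, 0, 0, 0] (i - k)

theorem comp_duValPoint {R R' : Type*} [AddMonoid R] [AddMonoid R'] (f : R →+ R') (a b c : R)
    (k : Fin 7) : f ∘ duValPoint a b c k = duValPoint (f a) (f b) (f c) k := by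
  funext i
  simp only [Function.comp_apply, duValPoint]
  generalize i - k = j
  fin_cases j <;> simp

def duValInt : Finset (Fin 7 → ℤ) :=
  (({1, -1} ×ˢ {1, -1} ×ˢ {1, -1} : Finset (ℤ × ℤ × ℤ)) ×ˢ univ).image
    fun p => duValPoint p.1.1 p.1.2.1 p.1.2.2 p.2

def duValLayer (c : ℤ) : Finset (Fin 7 → ℤ) := duValInt.filter (· 0 = c)

theorem exists_intCast_eq_iff_eq_one_or_eq_neg_one {R : Type*} [Ring R] (e : R) :
    (∃ a : ℤ, (a = 1 ∨ a = -1) ∧ (a : R) = e) ↔ (e = 1 ∨ e = -1) := by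
  constructor
  · rintro ⟨a, rfl | rfl, rfl⟩ <;> simp
  · rintro (rfl | rfl)
    exacts [⟨1, by simp⟩, ⟨-1, by simp⟩]

theorem duValV_eq_image : duValV = (Int.cast ∘ ·) '' (duValInt : Set (Fin 7 → ℤ)) := by
  ext v
  simp only [duValV, duValInt, coe_image, coe_product, Set.mem_image, Set.mem_prod, mem_coe,
    mem_insert, mem_singleton, mem_univ, and_true, Prod.exists]
  constructor
  · rintro ⟨e1, e2, e3, h1, h2, h3, k, hv⟩
    obtain ⟨a, ha, rfl⟩ := (exists_intCast_eq_iff_eq_one_or_eq_neg_one e1).2 h1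
    obtain ⟨b, hb, rfl⟩ := (exists_intCast_eq_iff_eq_one_or_eq_neg_one e2).2 h2
    obtain ⟨c, hc, rfl⟩ := (exists_intCast_eq_iff_eq_one_or_eq_neg_one e3).2 h3
    exact ⟨_, ⟨a, b, c, k, ⟨ha, hb, hc⟩, rfl⟩,
      (comp_duValPoint (Int.castAddHom ℝ) a b c k).trans (funext hv).symm⟩
  · rintro ⟨_, ⟨a, b, c, k, ⟨ha, hb, hc⟩, rfl⟩, rfl⟩
    refine ⟨a, b, c, ?_, ?_, ?_, k, fun i => ?_⟩
    · exact (exists_intCast_eq_iff_eq_one_or_eq_neg_one _).1 ⟨a, ha, rfl⟩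
    · exact (exists_intCast_eq_iff_eq_one_or_eq_neg_one _).1 ⟨b, hb, rfl⟩
    · exact (exists_intCast_eq_iff_eq_one_or_eq_neg_one _).1 ⟨c, hc, rfl⟩
    · exact congrFun (comp_duValPoint (Int.castAddHom ℝ) a b c k) i

theorem duValV_layer_eq_image (c : ℤ) :
    {v ∈ duValV | v 0 = c} = (Int.cast ∘ ·) '' (duValLayer c : Set (Fin 7 → ℤ)) := by
  rw [duValV_eq_image]
  ext v
  constructor
  · rintro ⟨⟨x, hx, rfl⟩, hx0⟩
    exact ⟨x, mem_filter.2 ⟨hx, Int.cast_injective hx0⟩, rfl⟩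
  · rintro ⟨x, hx, rfl⟩
    obtain ⟨hx, hx0⟩ := mem_filter.1 hx
    exact ⟨⟨x, hx, rfl⟩, congrArg Int.cast hx0⟩

theorem ncard_image_intCast {n R : Type*} [AddGroupWithOne R] [CharZero R]
    (T : Finset (n → ℤ)) :
    ((Int.cast ∘ ·) '' (T : Set (n → ℤ)) : Set (n → R)).ncard = T.card := by
  rw [Set.ncard_image_of_injective _ Int.cast_injective.comp_left, Set.ncard_coe_finset]

end IntegerModel

section HalfCube

def pairSums {R : Type*} [Ring R] (x : Fin 7 → R) : Fin 6 → R :=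
  ![x 1 + x 3, x 1 - x 3, x 2 + x 6, x 2 - x 6, x 4 + x 5, x 4 - x 5]

theorem comp_pairSums {R R' : Type*} [Ring R] [Ring R'] (f : R →+* R') (x : Fin 7 → R) :
    f ∘ pairSums x = pairSums (f ∘ x) := by
  funext j
  fin_cases j <;> simp [pairSums]

theorem sum_sq_pairSums_sub {R : Type*} [CommRing R] {p q : Fin 7 → R} (h : p 0 = q 0) :
    ∑ j, (pairSums p j - pairSums q j) ^ 2 = 2 * ∑ i, (p - q) i ^ 2 := by
  simp only [pairSums, Fin.sum_univ_six, Fin.sum_univ_seven, Pi.sub_apply, h]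
  simp only [Fin.isValue, Matrix.cons_val]
  ring

def halfCubeCoords (x : Fin 7 → ℤ) : Fin 6 → ℤ := fun j => (1 + pairSums x j) / 2

noncomputable def halfCubeMap (v : Fin 7 → ℝ) : Fin 6 → ℤ := halfCubeCoords (round ∘ v)

theorem halfCubeMap_intCast (x : Fin 7 → ℤ) :
    halfCubeMap (Int.cast ∘ x) = halfCubeCoords x := by
  simp [halfCubeMap, Function.comp_def]

def evenHalfCube : Finset (Fin 6 → ℤ) :=
  (Fintype.piFinset fun _ => ({0, 1} : Finset ℤ)).filter fun u => Even (∑ i, u i)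

theorem coe_evenHalfCube :
    (evenHalfCube : Set (Fin 6 → ℤ)) =
      {u | (∀ i, u i = 0 ∨ u i = 1) ∧ Even (∑ i, u i)} := by
  ext u
  simp [evenHalfCube]

end HalfCube

section FiniteChecks

theorem card_duValInt : duValInt.card = 56 := by decide

theorem card_duValLayer_one : (duValLayer 1).card = 12 := by decide

theorem card_duValLayer_neg_one : (duValLayer (-1)).card = 12 := by decide

theorem card_duValLayer_zero : (duValLayer 0).card = 32 := by decide

theorem isCrossPolytopeVertices_duValLayer_one :
    IsCrossPolytopeVertices (duValLayer 1 : Set (Fin 7 → ℤ)) (Pi.single 0 1) := by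
  unfold IsCrossPolytopeVertices
  decide

theorem isCrossPolytopeVertices_duValLayer_neg_one :
    IsCrossPolytopeVertices (duValLayer (-1) : Set (Fin 7 → ℤ)) (-Pi.single 0 1) := by
  unfold IsCrossPolytopeVertices
  decide

theorem two_mul_halfCubeCoords {x : Fin 7 → ℤ} (hx : x ∈ duValLayer 0) (j : Fin 6) :
    2 * halfCubeCoords x j = 1 + pairSums x j := by
  revert x j
  decide

theorem image_halfCubeCoords_duValLayer_zero :
    (duValLayer 0).image halfCubeCoords = evenHalfCube := by decide

theorem apply_zero_cases_of_mem_duValInt {x : Fin 7 → ℤ} (hx : x ∈ duValInt) :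
    x 0 = -1 ∨ x 0 = 0 ∨ x 0 = 1 := by
  revert x
  decide

end FiniteChecks

theorem ncard_duValV_layer (c : ℤ) : {v ∈ duValV | v 0 = c}.ncard = (duValLayer c).card := by
  rw [duValV_layer_eq_image, ncard_image_intCast]

theorem e1v_eq_intCast : e1v = Int.cast ∘ Pi.single 0 1 := by
  ext i
  by_cases hi : i = 0 <;> simp [e1v, hi]

theorem isCrossPolytopeVertices_duValV_layer_one :
    IsCrossPolytopeVertices {v ∈ duValV | v 0 = 1} e1v := by
  have h := isCrossPolytopeVertices_duValLayer_one.image (Int.castRingHom ℝ)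
  rwa [Int.coe_castRingHom, ← e1v_eq_intCast, ← duValV_layer_eq_image, Int.cast_one] at h

theorem isCrossPolytopeVertices_duValV_layer_neg_one :
    IsCrossPolytopeVertices {v ∈ duValV | v 0 = -1} (-e1v) := by
  have h := isCrossPolytopeVertices_duValLayer_neg_one.image (Int.castRingHom ℝ)
  have hcenter : (Int.cast ∘ (-Pi.single 0 1) : Fin 7 → ℝ) = -e1v := by
    rw [e1v_eq_intCast]
    ext i
    simp
  rwa [Int.coe_castRingHom, hcenter, ← duValV_layer_eq_image, Int.cast_neg, Int.cast_one] at h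

theorem halfCubeMap_intCast_apply {x : Fin 7 → ℤ} (hx : x ∈ duValLayer 0) (j : Fin 6) :
    (halfCubeMap (Int.cast ∘ x) j : ℝ) = (1 + pairSums (Int.cast ∘ x) j) / 2 := by
  have h := congrArg (Int.cast : ℤ → ℝ) (two_mul_halfCubeCoords hx j)
  have hpair : pairSums (Int.cast ∘ x) j = ((pairSums x j : ℤ) : ℝ) :=
    (congrFun (comp_pairSums (Int.castRingHom ℝ) x) j).symm
  rw [halfCubeMap_intCast, hpair]
  push_cast at h
  linarith

theorem sq7_sub_eq_two_mul_halfCubeMap {p q : Fin 7 → ℝ} (hp : p ∈ {v ∈ duValV | v 0 = 0})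
    (hq : q ∈ {v ∈ duValV | v 0 = 0}) :
    sq7 (p - q) = 2 * ∑ j, ((halfCubeMap p j : ℝ) - (halfCubeMap q j : ℝ)) ^ 2 := by
  have h0 : p 0 = q 0 := hp.2.trans hq.2.symm
  rw [← Int.cast_zero (R := ℝ), duValV_layer_eq_image] at hp hq
  obtain ⟨x, hx, rfl⟩ := hp
  obtain ⟨y, hy, rfl⟩ := hq
  simp only [halfCubeMap_intCast_apply hx, halfCubeMap_intCast_apply hy]
  calc sq7 (Int.cast ∘ x - Int.cast ∘ y)
      = (∑ j, (pairSums (Int.cast ∘ x) j - pairSums (Int.cast ∘ y) j) ^ 2) / 2 := by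
        rw [sum_sq_pairSums_sub h0, sq7]
        ring
    _ = _ := by
        rw [mul_sum, sum_div]
        congr 1 with j
        ring

theorem eq_of_sq7_sub_eq_zero {p q : Fin 7 → ℝ} (h : sq7 (p - q) = 0) : p = q := by
  have hsq := (sum_eq_zero_iff_of_nonneg fun i _ => sq_nonneg ((p - q) i)).1 h
  funext i
  exact sub_eq_zero.1 (pow_eq_zero_iff two_ne_zero |>.1 (hsq i (mem_univ i)))

theorem bijOn_halfCubeMap :
    Set.BijOn halfCubeMap {v ∈ duValV | v 0 = 0}
      {u : Fin 6 → ℤ | (∀ i, u i = 0 ∨ u i = 1) ∧ Even (∑ i, u i)} := by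
  have hinj : Set.InjOn halfCubeMap {v ∈ duValV | v 0 = 0} := fun p hp q hq hpq =>
    eq_of_sq7_sub_eq_zero (by simp [sq7_sub_eq_two_mul_halfCubeMap hp hq, hpq])
  convert hinj.bijOn_image
  rw [← Int.cast_zero (R := ℝ), duValV_layer_eq_image, ← coe_evenHalfCube,
    ← image_halfCubeCoords_duValLayer_zero, Set.image_image, coe_image]
  simp only [halfCubeMap_intCast]

theorem apply_zero_cases_of_mem_duValV {v : Fin 7 → ℝ} (hv : v ∈ duValV) :
    v 0 = -1 ∨ v 0 = 0 ∨ v 0 = 1 := by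
  rw [duValV_eq_image] at hv
  obtain ⟨x, hx, rfl⟩ := hv
  rcases apply_zero_cases_of_mem_duValInt hx with h | h | h <;> simp [h]

/-- Du Val's representation of the Gosset polytope `G₇`: the 56 cyclic shifts of
`(±1, ±1, 0, ±1, 0, 0, 0)` split into three layers `x₁ = 1, 0, -1`; the outer
layers are regular 6-dimensional cross-polytopes centered at `±e₁` and the
middle layer is similar to a 6-half-cube, so the lamina number is at most 3. -/
theorem stmt_11 :
    duValV.ncard = 56 ∧
    -- (a) the layer x₁ = 1: a cross-polytope centered at e₁
    {v ∈ duValV | v 0 = 1}.ncard = 12 ∧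
    (∀ p ∈ {v ∈ duValV | v 0 = 1}, sq7 (p - e1v) = 2 ∧
      ((2 : ℝ) • e1v - p) ∈ {v ∈ duValV | v 0 = 1}) ∧
    (∀ p ∈ {v ∈ duValV | v 0 = 1}, ∀ q ∈ {v ∈ duValV | v 0 = 1},
      q ≠ p → q ≠ (2 : ℝ) • e1v - p → sq7 (p - q) = 4) ∧
    -- (a') the layer x₁ = -1: a cross-polytope centered at -e₁
    {v ∈ duValV | v 0 = -1}.ncard = 12 ∧
    (∀ p ∈ {v ∈ duValV | v 0 = -1}, sq7 (p - (-e1v)) = 2 ∧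
      ((2 : ℝ) • (-e1v) - p) ∈ {v ∈ duValV | v 0 = -1}) ∧
    (∀ p ∈ {v ∈ duValV | v 0 = -1}, ∀ q ∈ {v ∈ duValV | v 0 = -1},
      q ≠ p → q ≠ (2 : ℝ) • (-e1v) - p → sq7 (p - q) = 4) ∧
    -- (b) the layer x₁ = 0: similar to a 6-half-cube
    {v ∈ duValV | v 0 = 0}.ncard = 32 ∧
    (∃ f : (Fin 7 → ℝ) → (Fin 6 → ℤ),
      Set.BijOn f {v ∈ duValV | v 0 = 0}
        {u : Fin 6 → ℤ | (∀ i, u i = 0 ∨ u i = 1) ∧ Even (∑ i, u i)} ∧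
      ∀ p ∈ {v ∈ duValV | v 0 = 0}, ∀ q ∈ {v ∈ duValV | v 0 = 0},
        sq7 (p - q) = 2 * ∑ i, ((f p i : ℝ) - (f q i : ℝ)) ^ 2) ∧
    -- the three parallel hyperplanes x₁ = -1, 0, 1 cover V
    (∀ v ∈ duValV, v 0 = -1 ∨ v 0 = 0 ∨ v 0 = 1) := by
  refine ⟨?_, ?_, isCrossPolytopeVertices_duValV_layer_one.1,
    isCrossPolytopeVertices_duValV_layer_one.2, ?_, isCrossPolytopeVertices_duValV_layer_neg_one.1,
    isCrossPolytopeVertices_duValV_layer_neg_one.2, ?_,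
    ⟨halfCubeMap, bijOn_halfCubeMap, fun p hp q hq => sq7_sub_eq_two_mul_halfCubeMap hp hq⟩,
    fun v hv => apply_zero_cases_of_mem_duValV hv⟩
  · rw [duValV_eq_image, ncard_image_intCast, card_duValInt]
  · exact_mod_cast (ncard_duValV_layer 1).trans card_duValLayer_one
  · exact_mod_cast (ncard_duValV_layer (-1)).trans card_duValLayer_neg_one
  · exact_mod_cast (ncard_duValV_layer 0).trans card_duValLayer_zero
end

section
/- The lamina number of the vertex set S₆ of the Gosset polytope G₆ equals 3: there exist three pairwise disjoint affine subspaces of ℝ⁶ whose intersections with S₆ are nonempty proper subsets partitioning S₆, but no two pairwise disjoint affine subspaces have this property. -/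
open Matrix


/-- `S` can be covered by `k` pairwise disjoint affine subspaces, each meeting
`S` in a nonempty proper subset (a partition of `S` into `k` laminae). -/
def LaminaCover {n : ℕ} (S : Set (Fin n → ℤ)) (k : ℕ) : Prop :=
  ∃ L : Fin k → AffineSubspace ℝ (Fin n → ℝ),
    (∀ i j, i ≠ j → (L i : Set (Fin n → ℝ)) ∩ (L j : Set (Fin n → ℝ)) = ∅) ∧
    (∀ j, {v ∈ S | vR v ∈ L j}.Nonempty ∧ {v ∈ S | vR v ∈ L j} ≠ S) ∧
    (∀ v ∈ S, ∃ j, vR v ∈ L j)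

/-!
The coordinate sum takes exactly the values 0, 1, 2 on `S6`, so its three level sets are laminae.

Two disjoint affine subspaces are separated by an affine function equal to 0 on one and to 1 on
the other, so a cover of `S6` by two laminae would give an affine function `f` that is {0, 1}-valued
and non-constant on `S6`. Replacing `f` by `1 - f` we may take `f 0 = 0`; then the values of the
linear part `(aᵢ, b)` of `f` at `eᵢ` and `e₆ - eᵢ` force `b` into {0, 1, 2}. The value
`∑ aᵢ - 3b` at `𝟙 - 3e₆ = (1, 1, 1, 1, 1, -3)` excludes `b = 2`, and for `b = 1` it forces some
`aᵢ = 0`; the vertices `eᵢ + eⱼ - e₆` then make every other `aⱼ` equal to 1, and the vertex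
`𝟙 - eᵢ - 2e₆` gets the value 2. So `b = 0`, all coefficients vanish and `f` is constant on `S6`.
-/

open Equiv

@[simp] theorem vR_zero {n : ℕ} : vR (0 : Fin n → ℤ) = 0 := funext fun _ => Int.cast_zero

theorem zero_mem_S6 : (0 : Fin 6 → ℤ) ∈ S6 := Or.inl (Or.inl (Or.inr rfl))

theorem AffineSubspace.exists_affineMap_eq_zero_and_eq_one_of_disjoint {k V : Type*} [Field k]
    [AddCommGroup V] [Module k V] {s t : AffineSubspace k V} (hst : Disjoint (s : Set V) t)
    {p q : V} (hp : p ∈ s) (hq : q ∈ t) :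
    ∃ f : V →ᵃ[k] k, (∀ x ∈ s, f x = 0) ∧ ∀ x ∈ t, f x = 1 := by
  have hqp : q - p ∉ s.direction ⊔ t.direction := by
    intro h
    have hlt := sup_direction_lt_of_nonempty_of_inter_empty ⟨p, hp⟩ ⟨q, hq⟩
      (Set.disjoint_iff_inter_eq_empty.mp hst)
    rw [direction_sup hp hq, vsub_eq_sub,
      sup_eq_left.mpr ((Submodule.span_singleton_le_iff_mem _ _).mpr h)] at hlt
    exact hlt.false
  obtain ⟨g, hg0, hg1⟩ := LinearMap.exists_extend_of_notMem (0 : _ →ₗ[k] k) hqp 1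
  have hg : ∀ v ∈ s.direction ⊔ t.direction, g v = 0 := fun v hv => by
    simpa using congr($hg0 ⟨v, hv⟩)
  refine ⟨g.toAffineMap - AffineMap.const k V (g p), fun x hx => ?_, fun x hx => ?_⟩
  · simpa [sub_eq_zero, ← map_sub] using
      hg _ (Submodule.mem_sup_left (vsub_mem_direction hx hp))
  · have := hg _ (Submodule.mem_sup_right (vsub_mem_direction hx hq))
    calc g x - g p = g (x - q) + g (q - p) := by simp
      _ = 1 := by simp_all

theorem laminaCover_of_affineMap_levels {n k : ℕ} (hk : 2 ≤ k) {S : Set (Fin n → ℤ)}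
    (g : (Fin n → ℝ) →ᵃ[ℝ] ℝ) (c : Fin k → ℝ) (hc : Function.Injective c)
    (hcov : ∀ v ∈ S, ∃ j, g (vR v) = c j) (hatt : ∀ j, ∃ v ∈ S, g (vR v) = c j) :
    LaminaCover S k := by
  have : Nontrivial (Fin k) := Fin.nontrivial_iff_two_le.mpr hk
  let L : Fin k → AffineSubspace ℝ (Fin n → ℝ) := fun j => (affineSpan ℝ {c j}).comap g
  have hL (x : Fin n → ℝ) (j : Fin k) : x ∈ L j ↔ g x = c j := by
    simp [L, AffineSubspace.mem_affineSpan_singleton]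
  refine ⟨L, fun i j hij => ?_, fun j => ⟨?_, ?_⟩, fun v hv => ?_⟩
  · refine Set.eq_empty_of_forall_notMem fun x ⟨hi, hj⟩ => hij (hc ?_)
    rw [SetLike.mem_coe, hL] at hi hj
    rw [← hi, ← hj]
  · obtain ⟨v, hv, hgv⟩ := hatt j
    exact ⟨v, hv, (hL _ j).mpr hgv⟩
  · obtain ⟨j', hj'⟩ := exists_ne j
    obtain ⟨v, hv, hgv⟩ := hatt j'
    intro h
    have hvj : g (vR v) = c j := (hL _ j).mp ((Set.ext_iff.mp h v).mpr hv).2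
    exact hj' (hc (hgv.symm.trans hvj))
  · obtain ⟨j, hj⟩ := hcov v hv
    exact ⟨j, (hL _ j).mpr hj⟩

theorem not_laminaCover_two {n : ℕ} {S : Set (Fin n → ℤ)}
    (hS : ∀ f : (Fin n → ℝ) →ᵃ[ℝ] ℝ, (∀ v ∈ S, f (vR v) ∈ ({0, 1} : Set ℝ)) →
      ∀ v ∈ S, ∀ w ∈ S, f (vR v) = f (vR w)) :
    ¬ LaminaCover S 2 := by
  rintro ⟨L, hdisj, hlam, hcov⟩
  obtain ⟨x, hxS, hxL⟩ := (hlam 0).1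
  obtain ⟨y, hyS, hyL⟩ := (hlam 1).1
  obtain ⟨f, hf0, hf1⟩ := AffineSubspace.exists_affineMap_eq_zero_and_eq_one_of_disjoint
    (Set.disjoint_iff_inter_eq_empty.mpr (hdisj 0 1 (by decide))) hxL hyL
  have hbin : ∀ v ∈ S, f (vR v) ∈ ({0, 1} : Set ℝ) := fun v hv => by
    obtain ⟨j, hj⟩ := hcov v hv
    fin_cases j
    · exact Or.inl (hf0 _ hj)
    · exact Or.inr (hf1 _ hj)
  simpa [hf0 _ hxL, hf1 _ hyL] using hS f hbin x hxS y hyS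

theorem Equiv.Perm.exists_apply_eq_and_apply_eq {α : Type*} [DecidableEq α] {x y k m : α}
    (hxy : x ≠ y) (hkm : k ≠ m) : ∃ σ : Perm α, σ x = k ∧ σ y = m := by
  refine ⟨swap x k * swap y (swap x k m), ?_, by simp⟩
  have hm : swap x k m ≠ x := by rw [Ne, swap_apply_eq_iff, swap_apply_left]; exact hkm.symm
  simp [swap_apply_of_ne_of_ne hxy hm.symm]

theorem LinearMap.apply_vR_snoc_comp {n : ℕ} (φ : (Fin (n + 1) → ℝ) →ₗ[ℝ] ℝ) (w : Fin n → ℤ)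
    (t : ℤ) (σ : Perm (Fin n)) :
    φ (vR (Fin.snoc (w ∘ σ) t)) = ∑ i, (w i : ℝ) * φ (Pi.single (σ.symm i).castSucc 1)
      + t * φ (Pi.single (Fin.last n) 1) := by
  have hsingle (i : Fin (n + 1)) : (fun j => if i = j then (1 : ℝ) else 0) = Pi.single i 1 :=
    funext fun j => by simp [Pi.single_apply, eq_comm]
  rw [φ.pi_apply_eq_sum_univ, Fin.sum_univ_castSucc, ← Equiv.sum_comp σ.symm]
  simp [vR, hsingle]

/-- The hypotheses are the values at `eᵢ`, `e₆ - eᵢ`, `eᵢ + eⱼ - e₆`, `𝟙 - eᵢ - 2e₆` and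
`𝟙 - 3e₆` (vertices of `S6`) of the linear form with coefficients `(a, b)`. -/
theorem gosset_coeffs_eq_zero (a : Fin 5 → ℝ) (b : ℝ)
    (h_single : ∀ i, a i ∈ ({0, 1} : Set ℝ))
    (h_neg : ∀ i, b - a i ∈ ({0, 1} : Set ℝ))
    (h_pair : ∀ i j, i ≠ j → a i + a j - b ∈ ({0, 1} : Set ℝ))
    (h_four : ∀ i, ∑ j, a j - a i - 2 * b ∈ ({0, 1} : Set ℝ))
    (h_top : ∑ j, a j - 3 * b ∈ ({0, 1} : Set ℝ)) :
    a = 0 ∧ b = 0 := by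
  simp only [Set.mem_insert_iff, Set.mem_singleton_iff] at *
  have hb : b = 0 ∨ b = 1 ∨ b = 2 := by
    rcases h_single 0 with h | h <;> rcases h_neg 0 with h' | h'
    exacts [Or.inl (by linarith), Or.inr (Or.inl (by linarith)), Or.inr (Or.inl (by linarith)),
      Or.inr (Or.inr (by linarith))]
  rcases hb with rfl | rfl | rfl
  · refine ⟨funext fun i => show a i = 0 from ?_, rfl⟩
    rcases h_single i with h | h <;> rcases h_neg i with h' | h' <;> linarith
  · exfalso
    obtain ⟨k, hk⟩ : ∃ k, a k = 0 := by
      by_contra! h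
      have hone : ∀ i, a i = 1 := fun i => (h_single i).resolve_left (h i)
      norm_num [hone] at h_top
    have hone : ∀ j, j ≠ k → a j = 1 := fun j hj => by
      rcases h_single j with h | h <;> rcases h_pair k j (Ne.symm hj) with h' | h' <;> linarith
    have hsum : ∑ j, a j = 4 := by
      rw [← Finset.add_sum_erase _ _ (Finset.mem_univ k), hk,
        Finset.sum_congr rfl fun j hj => hone j (Finset.ne_of_mem_erase hj)]
      simp
    rcases h_four k with h | h <;> linarith
  · exfalso
    have hone : ∀ i, a i = 1 := fun i => by
      rcases h_single i with h | h <;> rcases h_neg i with h' | h' <;> linarith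
    norm_num [hone] at h_top

theorem linearMap_eq_zero_of_zero_one_valued_on_S6 (φ : (Fin 6 → ℝ) →ₗ[ℝ] ℝ)
    (hφ : ∀ v ∈ S6, φ (vR v) ∈ ({0, 1} : Set ℝ)) : φ = 0 := by
  set a : Fin 5 → ℝ := fun i => φ (Pi.single i.castSucc 1)
  set b := φ (Pi.single (Fin.last 5) 1)
  have hval (w : Fin 5 → ℤ) (t : ℤ) (τ : Perm (Fin 5)) (hw : Fin.snoc (w ∘ τ.symm) t ∈ S6) :
      ∑ i, (w i : ℝ) * a (τ i) + t * b ∈ ({0, 1} : Set ℝ) := by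
    have := hφ _ hw
    rwa [φ.apply_vR_snoc_comp, Equiv.symm_symm] at this
  obtain ⟨ha0, hb0⟩ := gosset_coeffs_eq_zero a b
    (fun i => by
      simpa [Fin.sum_univ_five] using
        hval ![1, 0, 0, 0, 0] 0 (swap 0 i) (Or.inl (Or.inr ⟨_, rfl⟩)))
    (fun i => by
      simpa [Fin.sum_univ_five, sub_eq_neg_add] using
        hval ![-1, 0, 0, 0, 0] 1 (swap 0 i) (Or.inr ⟨_, rfl⟩))
    (fun i j hij => by
      obtain ⟨τ, rfl, rfl⟩ := Perm.exists_apply_eq_and_apply_eq (x := 0) (y := 1) (by decide) hij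
      simpa [Fin.sum_univ_five, sub_eq_add_neg] using
        hval ![1, 1, 0, 0, 0] (-1) τ (Or.inl (Or.inl (Or.inl (Or.inr ⟨_, rfl⟩)))))
    (fun i => by
      have hsum := Equiv.sum_comp (swap 0 i) a
      rw [Fin.sum_univ_five, swap_apply_left] at hsum
      rw [show ∑ j, a j - a i - 2 * b
          = ∑ j, ((![0, 1, 1, 1, 1] : Fin 5 → ℤ) j : ℝ) * a (swap 0 i j) + ((-2 : ℤ) : ℝ) * b by
        rw [← hsum]; simp [Fin.sum_univ_five]; ring]
      exact hval _ _ _ (Or.inl (Or.inl (Or.inl (Or.inl (Or.inr ⟨_, rfl⟩))))))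
    (by
      simpa [Fin.sum_univ_five, sub_eq_add_neg] using
        hval ![1, 1, 1, 1, 1] (-3) 1 (Or.inl (Or.inl (Or.inl (Or.inl (Or.inl rfl))))))
  ext i
  simp only [LinearMap.coe_comp, Function.comp_apply, LinearMap.coe_single,
    LinearMap.zero_comp, LinearMap.zero_apply]
  induction i using Fin.lastCases with
  | last => exact hb0
  | cast i => exact congr_fun ha0 i

theorem affineMap_apply_eq_of_zero_one_valued_on_S6 (f : (Fin 6 → ℝ) →ᵃ[ℝ] ℝ)
    (hf : ∀ v ∈ S6, f (vR v) ∈ ({0, 1} : Set ℝ)) :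
    ∀ v ∈ S6, ∀ w ∈ S6, f (vR v) = f (vR w) := by
  have hdecomp (x : Fin 6 → ℝ) : f x = f.linear x + f 0 :=
    (eq_sub_iff_add_eq.mp (by simpa using f.linearMap_vsub x 0)).symm
  have hlin : f.linear = 0 := by
    obtain h0 | h0 : f 0 = 0 ∨ f 0 = 1 := by simpa using hf 0 zero_mem_S6
    · exact linearMap_eq_zero_of_zero_one_valued_on_S6 _ fun v hv => by
        simpa [hdecomp (vR v), h0] using hf v hv
    · refine neg_eq_zero.mp (linearMap_eq_zero_of_zero_one_valued_on_S6 _ fun v hv => ?_)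
      have hv' := hf v hv
      simp only [hdecomp (vR v), h0, LinearMap.neg_apply, Set.mem_insert_iff,
        Set.mem_singleton_iff] at hv' ⊢
      exact hv'.symm.imp (fun _ => by linarith) (fun _ => by linarith)
  intro v _ w _
  rw [hdecomp, hdecomp (vR w), hlin]; simp

theorem laminaCover_S6_three : LaminaCover S6 3 := by
  let g : (Fin 6 → ℝ) →ₗ[ℝ] ℝ := ∑ i, LinearMap.proj i
  have hg (w : Fin 5 → ℤ) (t : ℤ) (σ : Perm (Fin 5)) :
      g (vR (Fin.snoc (w ∘ σ) t)) = ∑ i, (w i : ℝ) + t := by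
    simp [g.apply_vR_snoc_comp, g]
  refine laminaCover_of_affineMap_levels (by norm_num) g.toAffineMap ![0, 1, 2] ?_ ?_ ?_
  · intro i j h
    fin_cases i <;> fin_cases j <;> first | rfl | norm_num at h
  · rintro v (((((rfl | ⟨σ, rfl⟩) | ⟨σ, rfl⟩) | rfl) | ⟨σ, rfl⟩) | ⟨σ, rfl⟩)
    · exact ⟨2, (hg _ _ 1).trans (by simp [Fin.sum_univ_five]; norm_num)⟩
    · exact ⟨2, (hg _ _ σ).trans (by simp [Fin.sum_univ_five]; norm_num)⟩
    · exact ⟨1, (hg _ _ σ).trans (by simp [Fin.sum_univ_five])⟩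
    · exact ⟨0, by simp⟩
    · exact ⟨1, (hg _ _ σ).trans (by simp [Fin.sum_univ_five])⟩
    · exact ⟨0, (hg _ _ σ).trans (by simp [Fin.sum_univ_five])⟩
  · intro j
    fin_cases j
    · exact ⟨0, zero_mem_S6, by simp⟩
    · exact ⟨_, Or.inl (Or.inr ⟨1, rfl⟩), (hg _ _ 1).trans (by simp [Fin.sum_univ_five])⟩
    · exact ⟨_, Or.inl (Or.inl (Or.inl (Or.inl (Or.inl rfl)))),
        (hg _ _ 1).trans (by simp [Fin.sum_univ_five]; norm_num)⟩

/-- The lamina number of the Gosset polytope `G₆` equals 3: its vertex set can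
be partitioned by three pairwise disjoint affine subspaces, but not by two. -/
theorem stmt_14 : LaminaCover S6 3 ∧ ¬ LaminaCover S6 2 :=
  ⟨laminaCover_S6_three, not_laminaCover_two affineMap_apply_eq_of_zero_one_valued_on_S6⟩
end

section
/- Let M be a real symmetric positive semidefinite n×n matrix. Then the following are equivalent: (a) the real span of ℤⁿ ∩ {x ∈ ℝⁿ : Mx = 0} equals the kernel {x ∈ ℝⁿ : Mx = 0} (i.e. M has rational kernel); (b) there exist finitely many integer vectors v₁, …, v_k ∈ ℤⁿ and reals λ₁, …, λ_k ≥ 0 such that xᵀMx = Σᵢ λᵢ (vᵢ·x)² for all x ∈ ℝⁿ. (The rational closure of the cone of positive definite quadratic forms is the real cone spanned by the rank-one forms (v·x)² with v ∈ ℤⁿ.) -/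
/-!
If `xᵀMx = ∑ λᵢ (vᵢ·x)²` with integral `vᵢ`, then `ker M` is the solution space of the integral
equations `vᵢ·x = 0` (`λᵢ > 0`), and real solutions of integral linear equations are spanned by
integral ones: expanding the coordinates of a real solution in a Hamel basis of `ℝ` over `ℚ`
writes it as a real combination of rational solutions.

Conversely, if `ker M` is rational, so is its orthogonal complement; with independent integral
vectors spanning it as the rows of `U`, one has `ker U = ker M` and `xᵀMx = (Ux)ᵀN(Ux)` with `N`
positive definite. Write `N = ε • 1 + ∑ wᵢwᵢᵀ` and replace the `wᵢ` by rational approximations: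
the error is a small matrix, which `ε • 1` absorbs, as a diagonally dominant form is a
nonnegative combination of the squares `xⱼ²` and `(xⱼ ± xₖ)²`.
-/

open Matrix

theorem exists_nat_smul_eq_intCast {K ι : Type*} [Field K] [CharZero K] [Fintype ι] (q : ι → ℚ) :
    ∃ d : ℕ, 0 < d ∧ ∃ v : ι → ℤ, (d : K) • (fun i => (q i : K)) = fun i => (v i : K) := by
  refine ⟨∏ i, (q i).den, Finset.prod_pos fun i _ => (q i).den_pos, ?_⟩
  choose t ht using fun i => Finset.dvd_prod_of_mem (fun j => (q j).den) (Finset.mem_univ i)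
  refine ⟨fun i => (q i).num * t i, funext fun i => ?_⟩
  rw [Pi.smul_apply, smul_eq_mul, ht i]
  have hnum := congrArg (Rat.cast : ℚ → K) (Rat.mul_den_eq_num (q i))
  push_cast at hnum ⊢
  linear_combination (t i : K) * hnum

theorem exists_rat_mul_approx {ι : Type*} [Finite ι] (u : ι → ℝ) {η : ℝ} (hη : 0 < η) :
    ∃ q : ι → ℚ, ∀ j k, |u j * u k - q j * q k| < η := by
  have hopen : IsOpen {y : ι → ℝ | ∀ j k, |u j * u k - y j * y k| < η} := by
    simp only [Set.ofPred_forall]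
    exact isOpen_iInter_of_finite fun j => isOpen_iInter_of_finite fun k =>
      isOpen_lt (by fun_prop) continuous_const
  obtain ⟨q, hq⟩ := (DenseRange.piMap fun _ => Rat.denseRange_cast).exists_mem_open hopen
    ⟨u, fun j k => by simpa using hη⟩
  exact ⟨q, hq⟩

theorem mem_span_intPoints_of_dotProduct_eq_zero {ι κ : Type*} [Fintype ι] (c : κ → ι → ℤ)
    {x : ι → ℝ} (hx : ∀ k, (fun i => (c k i : ℝ)) ⬝ᵥ x = 0) :
    x ∈ Submodule.span ℝ {y | (∃ v : ι → ℤ, y = fun i => (v i : ℝ)) ∧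
      ∀ k, (fun i => (c k i : ℝ)) ⬝ᵥ y = 0} := by
  have hrat (q : ι → ℚ) (hq : ∀ k, (fun i => (c k i : ℚ)) ⬝ᵥ q = 0) :
      (fun i => (q i : ℝ)) ∈ Submodule.span ℝ {y | (∃ v : ι → ℤ, y = fun i => (v i : ℝ)) ∧
        ∀ k, (fun i => (c k i : ℝ)) ⬝ᵥ y = 0} := by
    obtain ⟨d, hd, v, hv⟩ := exists_nat_smul_eq_intCast (K := ℝ) q
    have hdR : (d : ℝ) ≠ 0 := by positivity
    rw [← inv_smul_smul₀ hdR (fun i => (q i : ℝ)), hv]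
    refine Submodule.smul_mem _ _ (Submodule.subset_span ⟨⟨v, rfl⟩, fun k => ?_⟩)
    rw [← hv, dotProduct_smul]
    have := congrArg (Rat.cast : ℚ → ℝ) (hq k)
    simp only [dotProduct, Rat.cast_sum, Rat.cast_mul, Rat.cast_intCast, Rat.cast_zero] at this
    simp [dotProduct, this]
  let B := Module.Basis.ofVectorSpace ℚ ℝ
  let y : _ → ι → ℚ := fun b i => B.repr (x i) b
  have hy (b) (k : κ) : (fun i => (c k i : ℚ)) ⬝ᵥ y b = 0 := by
    have := congrArg (fun r => B.repr r b) (hx k)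
    simpa [dotProduct, ← zsmul_eq_mul, y] using this
  have hxy : x = ∑ b ∈ Finset.univ.biUnion fun i => (B.repr (x i)).support,
      B b • fun i => (y b i : ℝ) := by
    ext i
    conv_lhs => rw [← B.linearCombination_repr (x i), Finsupp.linearCombination_apply]
    rw [Finsupp.sum_of_support_subset _
      (Finset.subset_biUnion_of_mem (fun j => (B.repr (x j)).support) (Finset.mem_univ i))
      (fun b a => a • B b) fun _ _ => zero_smul _ _]
    simp [Finset.sum_apply, y, Rat.smul_def, mul_comm]
  rw [hxy]
  exact Submodule.sum_mem _ fun b _ => Submodule.smul_mem _ _ (hrat (y b) (hy b))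

theorem dotProduct_eq_zero_of_mem_span {ι R : Type*} [Fintype ι] [CommSemiring R]
    {v x : ι → R} {s : Set (ι → R)} (hx : x ∈ Submodule.span R s) (hs : ∀ y ∈ s, v ⬝ᵥ y = 0) :
    v ⬝ᵥ x = 0 := by
  induction hx using Submodule.span_induction with
  | mem y hy => exact hs y hy
  | zero => exact dotProduct_zero v
  | add y z _ _ hy hz => rw [dotProduct_add, hy, hz, add_zero]
  | smul a y _ hy => rw [dotProduct_smul, hy, smul_zero]

theorem Matrix.range_mulVecLin_eq_top_of_linearIndependent_row {κ ι K : Type*} [Fintype ι]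
    [Fintype κ] [Field K] {A : Matrix κ ι K} (h : LinearIndependent K A.row) :
    LinearMap.range A.mulVecLin = ⊤ :=
  Submodule.eq_top_of_finrank_eq <| by
    rw [← Matrix.rank, rank_eq_finrank_span_row, finrank_span_eq_card h,
      Module.finrank_fintype_fun_eq_card]

theorem dotProduct_vecMulVec_mulVec_self {ι R : Type*} [Fintype ι] [CommRing R] (u x : ι → R) :
    x ⬝ᵥ vecMulVec u u *ᵥ x = (u ⬝ᵥ x) ^ 2 := by
  simp [vecMulVec_mulVec, dotProduct_comm, sq]

theorem Matrix.IsSymm.dotProduct_mulVec_add_of_mulVec_eq_zero {ι R : Type*} [Fintype ι]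
    [CommRing R] {M : Matrix ι ι R} (hM : M.IsSymm) {k : ι → R} (hk : M *ᵥ k = 0) (x : ι → R) :
    (x + k) ⬝ᵥ M *ᵥ (x + k) = x ⬝ᵥ M *ᵥ x := by
  rw [mulVec_add, hk, add_zero, add_dotProduct, dotProduct_mulVec k, ← mulVec_transpose, hM.eq, hk,
    zero_dotProduct, add_zero]

theorem Matrix.PosSemidef.isSymm {ι R : Type*} [Ring R] [PartialOrder R] [StarRing R]
    [TrivialStar R] {M : Matrix ι ι R} (hM : M.PosSemidef) : M.IsSymm :=
  isHermitian_iff_isSymm.mp hM.isHermitian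

/- The form of `M` factors through `L`, as `ker L = ker M`; a right inverse `R` of `L` then gives
the factor `Rᵀ M R`, which is definite because `L` is onto. -/
theorem Matrix.PosSemidef.exists_posDef_dotProduct_mulVec_eq {ι κ : Type*} [Fintype ι]
    [Fintype κ] [DecidableEq κ] {M : Matrix ι ι ℝ} (hM : M.PosSemidef) {L : Matrix κ ι ℝ}
    (hL : LinearMap.range L.mulVecLin = ⊤) (hker : ∀ x, L *ᵥ x = 0 ↔ M *ᵥ x = 0) :
    ∃ N : Matrix κ κ ℝ, N.PosDef ∧ ∀ x, x ⬝ᵥ M *ᵥ x = (L *ᵥ x) ⬝ᵥ N *ᵥ (L *ᵥ x) := by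
  obtain ⟨g, hg⟩ := L.mulVecLin.exists_rightInverse_of_surjective hL
  set R := LinearMap.toMatrix' g
  have hLR (w : κ → ℝ) : L *ᵥ (R *ᵥ w) = w := by
    rw [LinearMap.toMatrix'_mulVec]
    exact LinearMap.congr_fun hg w
  have hRform (w : κ → ℝ) : w ⬝ᵥ (Rᵀ * M * R) *ᵥ w = (R *ᵥ w) ⬝ᵥ M *ᵥ (R *ᵥ w) := by
    rw [← mulVec_mulVec, ← mulVec_mulVec, mulVec_transpose, dotProduct_comm, ← dotProduct_mulVec,
      dotProduct_comm]
  refine ⟨Rᵀ * M * R, posDef_iff_dotProduct_mulVec.mpr ⟨?_, fun w hw => ?_⟩, fun x => ?_⟩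
  · simpa [conjTranspose_eq_transpose_of_trivial] using
      (hM.conjTranspose_mul_mul_same R).isHermitian
  · rw [star_trivial, hRform]
    refine (hM.dotProduct_mulVec_nonneg (R *ᵥ w)).lt_of_ne' fun h0 => hw ?_
    have hMRw : M *ᵥ (R *ᵥ w) = 0 := (hM.dotProduct_mulVec_zero_iff _).mp (by rwa [star_trivial])
    rwa [← hker, hLR] at hMRw
  · have hk : M *ᵥ (x - R *ᵥ (L *ᵥ x)) = 0 := by
      rw [← hker, mulVec_sub, hLR, sub_self]
    rw [hRform, ← hM.isSymm.dotProduct_mulVec_add_of_mulVec_eq_zero hk (R *ᵥ (L *ᵥ x)),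
      add_sub_cancel]

open scoped MatrixOrder in
theorem Matrix.PosDef.exists_pos_posSemidef_sub_smul_one {ι : Type*} [Fintype ι] [DecidableEq ι]
    {N : Matrix ι ι ℝ} (hN : N.PosDef) : ∃ ε : ℝ, 0 < ε ∧ (N - ε • 1).PosSemidef := by
  cases isEmpty_or_nonempty ι
  · exact ⟨1, one_pos, by rw [Subsingleton.elim (N - (1 : ℝ) • 1) 0]; exact .zero⟩
  obtain ⟨ε, hε, hle⟩ := (CFC.exists_pos_algebraMap_le_iff hN.isHermitian).mpr
    ((StarOrderedRing.isStrictlyPositive_iff_spectrum_pos N hN.isHermitian).mp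
      hN.isStrictlyPositive)
  exact ⟨ε, hε, by simpa [Algebra.algebraMap_eq_smul_one, le_iff] using hle⟩

def integralSqCone (ι : Type*) [Fintype ι] : PointedCone ℝ ((ι → ℝ) → ℝ) :=
  PointedCone.hull ℝ (Set.range fun (v : ι → ℤ) (x : ι → ℝ) => ((fun i => (v i : ℝ)) ⬝ᵥ x) ^ 2)

namespace integralSqCone

variable {ι : Type*} [Fintype ι]

theorem smul_sq_mem (v : ι → ℤ) {c : ℝ} (hc : 0 ≤ c) :
    (fun x : ι → ℝ => c * ((fun i => (v i : ℝ)) ⬝ᵥ x) ^ 2) ∈ integralSqCone ι :=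
  Submodule.smul_mem _ (⟨c, hc⟩ : {c : ℝ // 0 ≤ c}) (Submodule.subset_span ⟨v, rfl⟩)

theorem smul_sq_rat_mem (q : ι → ℚ) {c : ℝ} (hc : 0 ≤ c) :
    (fun x : ι → ℝ => c * ((fun i => (q i : ℝ)) ⬝ᵥ x) ^ 2) ∈ integralSqCone ι := by
  obtain ⟨d, hd, v, hv⟩ := exists_nat_smul_eq_intCast (K := ℝ) q
  convert smul_sq_mem v (div_nonneg hc (sq_nonneg (d : ℝ))) using 2 with x
  rw [← hv, smul_dotProduct, smul_eq_mul]
  field_simp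

theorem smul_sq_apply_mem [DecidableEq ι] (j : ι) {c : ℝ} (hc : 0 ≤ c) :
    (fun x : ι → ℝ => c * x j ^ 2) ∈ integralSqCone ι := by
  convert smul_sq_mem (Pi.single j 1) hc using 3 with x
  simp [dotProduct, Pi.single_apply]

theorem abs_mul_sq_add_mul_mem [DecidableEq ι] (j k : ι) (a : ℝ) :
    (fun x : ι → ℝ => |a| / 2 * (x j ^ 2 + x k ^ 2) + a * (x j * x k)) ∈ integralSqCone ι := by
  have key (s t : ℝ) : |a| / 2 * (s ^ 2 + t ^ 2) + a * (s * t)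
      = max a 0 / 2 * (s + t) ^ 2 + max (-a) 0 / 2 * (s + -1 * t) ^ 2 := by
    rcases le_total a 0 with h | h
    · rw [max_eq_right h, max_eq_left (by linarith), abs_of_nonpos h]; ring
    · rw [max_eq_left h, max_eq_right (by linarith), abs_of_nonneg h]; ring
  have hdot (ε : ℤ) (x : ι → ℝ) :
      (fun i => ((Pi.single j 1 + ε • Pi.single k 1 : ι → ℤ) i : ℝ)) ⬝ᵥ x = x j + ε * x k := by
    simp [dotProduct, Pi.single_apply, add_mul, Finset.sum_add_distrib]
  convert add_mem
    (smul_sq_mem (Pi.single j 1 + (1 : ℤ) • Pi.single k 1) (by positivity : 0 ≤ max a 0 / 2))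
    (smul_sq_mem (Pi.single j 1 + (-1 : ℤ) • Pi.single k 1) (by positivity : 0 ≤ max (-a) 0 / 2))
    using 1
  refine funext fun x => ?_
  rw [Pi.add_apply, hdot, hdot, key]
  push_cast
  ring

/- Diagonal dominance: each `E j k * x j * x k` is paid for by `|E j k| / 2 * (x j ^ 2 + x k ^ 2)`,
and the diagonal `c` covers these costs. -/
theorem smul_dotProduct_self_add_mem {E : Matrix ι ι ℝ} {η c : ℝ} (hE : ∀ j k, |E j k| ≤ η)
    (hc : Fintype.card ι * η ≤ c) :
    (fun x => c * (x ⬝ᵥ x) + x ⬝ᵥ E *ᵥ x) ∈ integralSqCone ι := by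
  classical
  set r : ι → ℝ := fun j => (∑ k, |E j k| + ∑ k, |E k j|) / 2
  have hr (j : ι) : r j ≤ c := by
    have hsum (f : ι → ℝ) (hf : ∀ k, f k ≤ η) : ∑ k, f k ≤ Fintype.card ι * η := by
      simpa using Finset.sum_le_card_nsmul Finset.univ f η fun k _ => hf k
    have := hsum _ fun k => hE j k
    have := hsum _ fun k => hE k j
    simp only [r]
    linarith
  have heq : (fun x => c * (x ⬝ᵥ x) + x ⬝ᵥ E *ᵥ x)
      = ∑ j, (fun x : ι → ℝ => (c - r j) * x j ^ 2)
        + ∑ j, ∑ k, (fun x : ι → ℝ => |E j k| / 2 * (x j ^ 2 + x k ^ 2) + E j k * (x j * x k)) := by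
    ext x
    have hxx : x ⬝ᵥ x = ∑ j, x j ^ 2 := by simp only [dotProduct, sq]
    have hE : x ⬝ᵥ E *ᵥ x = ∑ j, ∑ k, E j k * (x j * x k) := by
      simp only [dotProduct, mulVec, Finset.mul_sum]
      exact Finset.sum_congr rfl fun j _ => Finset.sum_congr rfl fun k _ => by ring
    have hr : ∑ j, r j * x j ^ 2
        = ∑ j, ∑ k, |E j k| / 2 * x j ^ 2 + ∑ j, ∑ k, |E j k| / 2 * x k ^ 2 := by
      rw [Finset.sum_comm (f := fun j k => |E j k| / 2 * x k ^ 2), ← Finset.sum_add_distrib]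
      simp only [r, add_div, Finset.sum_div, add_mul, Finset.sum_mul, Finset.sum_add_distrib]
    simp only [Pi.add_apply, Finset.sum_apply, sub_mul, Finset.sum_sub_distrib, mul_add,
      Finset.sum_add_distrib, ← Finset.mul_sum, hxx, hE, hr]
    ring
  rw [heq]
  exact add_mem (Submodule.sum_mem _ fun j _ => smul_sq_apply_mem j (sub_nonneg.mpr (hr j)))
    (Submodule.sum_mem _ fun j _ => Submodule.sum_mem _ fun k _ => abs_mul_sq_add_mul_mem j k _)

theorem dotProduct_mulVec_mem_of_posDef [DecidableEq ι] {N : Matrix ι ι ℝ} (hN : N.PosDef) :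
    (fun x => x ⬝ᵥ N *ᵥ x) ∈ integralSqCone ι := by
  obtain ⟨ε, hε, hNε⟩ := hN.exists_pos_posSemidef_sub_smul_one
  obtain ⟨m, v, hv⟩ := posSemidef_iff_eq_sum_vecMulVec.mp hNε
  simp only [star_trivial] at hv
  set η := ε / (Fintype.card ι * m + 1)
  have hη : 0 < η := by positivity
  choose q hq using fun i => exists_rat_mul_approx (v i) hη
  set q' : Fin m → ι → ℝ := fun i j => (q i j : ℝ)
  set E := ∑ i, (vecMulVec (v i) (v i) - vecMulVec (q' i) (q' i))
  have hE (j k : ι) : |E j k| ≤ m * η := by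
    simp only [E, Matrix.sum_apply, Matrix.sub_apply, vecMulVec_apply]
    refine (Finset.abs_sum_le_sum_abs _ _).trans ?_
    simpa using Finset.sum_le_sum (s := Finset.univ) fun i _ => (hq i j k).le
  have hc : (Fintype.card ι : ℝ) * (m * η) ≤ ε := by
    rw [← mul_assoc, mul_div_assoc', div_le_iff₀ (by positivity)]
    linarith
  have hN_eq : N = ∑ i, vecMulVec (q' i) (q' i) + (ε • 1 + E) := by
    simp only [E, Finset.sum_sub_distrib, ← hv]
    abel
  have hform : (fun x => x ⬝ᵥ N *ᵥ x)
      = ∑ i, (fun x : ι → ℝ => 1 * (q' i ⬝ᵥ x) ^ 2) + fun x => ε * (x ⬝ᵥ x) + x ⬝ᵥ E *ᵥ x := by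
    ext x
    simp [hN_eq, add_mulVec, sum_mulVec, dotProduct_sum, dotProduct_vecMulVec_mulVec_self,
      smul_mulVec, dotProduct_smul]
  rw [hform]
  exact add_mem (Submodule.sum_mem _ fun i _ => smul_sq_rat_mem (q i) zero_le_one)
    (smul_dotProduct_self_add_mem hE hc)

theorem comp_mulVec_mem {κ : Type*} [Fintype κ] {Q : (κ → ℝ) → ℝ} (hQ : Q ∈ integralSqCone κ)
    (U : Matrix κ ι ℤ) : (fun x => Q (U.map (Int.cast : ℤ → ℝ) *ᵥ x)) ∈ integralSqCone ι := by
  suffices integralSqCone κ ≤ Submodule.comap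
      (LinearMap.funLeft _ ℝ fun x => U.map (Int.cast : ℤ → ℝ) *ᵥ x) (integralSqCone ι) from this hQ
  refine Submodule.span_le.mpr ?_
  rintro _ ⟨v, rfl⟩
  have hcast : (fun i => (v i : ℝ)) ᵥ* U.map (Int.cast : ℤ → ℝ) = fun j => ((v ᵥ* U) j : ℝ) := by
    ext j
    exact (RingHom.map_vecMul (Int.castRingHom ℝ) U v j).symm
  refine Submodule.subset_span ⟨v ᵥ* U, ?_⟩
  ext x
  simp only [LinearMap.funLeft_apply, dotProduct_mulVec, hcast]

theorem exists_sum_sq_of_mem {Q : (ι → ℝ) → ℝ} (hQ : Q ∈ integralSqCone ι) :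
    ∃ (k : ℕ) (v : Fin k → ι → ℤ) (lam : Fin k → ℝ), (∀ i, 0 ≤ lam i) ∧
      ∀ x, Q x = ∑ i, lam i * ((fun j => (v i j : ℝ)) ⬝ᵥ x) ^ 2 := by
  obtain ⟨k, f, g, hsum⟩ := Submodule.mem_span_set'.mp hQ
  choose v hv using fun i => (g i).2
  refine ⟨k, v, fun i => f i, fun i => (f i).2, fun x => ?_⟩
  simp only [← hsum, Finset.sum_apply, Pi.smul_apply, ← hv]
  rfl

end integralSqCone

theorem dotProduct_mulVec_mem_integralSqCone {ι : Type*} [Fintype ι] {M : Matrix ι ι ℝ}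
    (hM : M.PosSemidef)
    (hK : Submodule.span ℝ {x | (∃ v : ι → ℤ, x = fun i => (v i : ℝ)) ∧ M *ᵥ x = 0}
      = LinearMap.ker M.mulVecLin) :
    (fun x => x ⬝ᵥ M *ᵥ x) ∈ integralSqCone ι := by
  classical
  obtain ⟨b, hbT, hbspan, hbind⟩ := exists_linearIndependent ℝ
    {y : ι → ℝ | (∃ v : ι → ℤ, y = fun i => (v i : ℝ)) ∧
      ∀ c : {c : ι → ℤ // M *ᵥ (fun i => (c i : ℝ)) = 0}, (fun i => (c.1 i : ℝ)) ⬝ᵥ y = 0}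
  have : Fintype b := hbind.setFinite.fintype
  choose U hU using fun j : b => (hbT j.2).1
  set L := (Matrix.of U).map (Int.cast : ℤ → ℝ)
  have hLb (j : b) : L j = j := by
    rw [hU j]
    rfl
  have hL : LinearMap.range L.mulVecLin = ⊤ := by
    refine range_mulVecLin_eq_top_of_linearIndependent_row ?_
    rwa [show L.row = Subtype.val from funext hLb]
  have hker (x : ι → ℝ) : L *ᵥ x = 0 ↔ M *ᵥ x = 0 := by
    have hLx : L *ᵥ x = 0 ↔ ∀ j : b, (j : ι → ℝ) ⬝ᵥ x = 0 := by
      simp only [funext_iff, mulVec, ← hLb, Pi.zero_apply]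
    rw [hLx]
    constructor
    · intro hx
      have hMx : M *ᵥ x ∈ Submodule.span ℝ b := by
        rw [hbspan]
        refine mem_span_intPoints_of_dotProduct_eq_zero
          (fun c : {c : ι → ℤ // M *ᵥ (fun i => (c i : ℝ)) = 0} => c.1) fun c => ?_
        rw [dotProduct_mulVec, ← mulVec_transpose, hM.isSymm.eq, c.2, zero_dotProduct]
      rw [← hM.dotProduct_mulVec_zero_iff, star_trivial]
      exact dotProduct_eq_zero_of_mem_span hMx fun y hy => by rw [dotProduct_comm]; exact hx ⟨y, hy⟩
    · intro hx j
      have hxK : x ∈ LinearMap.ker M.mulVecLin := hx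
      rw [← hK] at hxK
      refine dotProduct_eq_zero_of_mem_span hxK ?_
      rintro _ ⟨⟨v, rfl⟩, hv⟩
      rw [dotProduct_comm]
      exact (hbT j.2).2 ⟨v, hv⟩
  obtain ⟨N, hN, hMN⟩ := hM.exists_posDef_dotProduct_mulVec_eq hL hker
  convert integralSqCone.comp_mulVec_mem (integralSqCone.dotProduct_mulVec_mem_of_posDef hN)
    (Matrix.of U) using 1
  exact funext hMN

theorem span_intPoints_eq_ker_of_eq_sum_sq {ι κ : Type*} [Fintype ι] [Fintype κ]
    {M : Matrix ι ι ℝ} (hM : M.PosSemidef) {v : κ → ι → ℤ} {lam : κ → ℝ} (hlam : ∀ i, 0 ≤ lam i)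
    (hQ : ∀ x, x ⬝ᵥ M *ᵥ x = ∑ i, lam i * ((fun j => (v i j : ℝ)) ⬝ᵥ x) ^ 2) :
    Submodule.span ℝ {x | (∃ w : ι → ℤ, x = fun i => (w i : ℝ)) ∧ M *ᵥ x = 0}
      = LinearMap.ker M.mulVecLin := by
  have hker (y : ι → ℝ) :
      M *ᵥ y = 0 ↔ ∀ i : {i // lam i ≠ 0}, (fun j => (v i j : ℝ)) ⬝ᵥ y = 0 := by
    rw [← hM.dotProduct_mulVec_zero_iff, star_trivial, hQ,
      Finset.sum_eq_zero_iff_of_nonneg fun i _ => mul_nonneg (hlam i) (sq_nonneg _)]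
    simp [Subtype.forall, or_iff_not_imp_left]
  refine le_antisymm (Submodule.span_le.mpr fun y hy => hy.2) fun x hx => ?_
  have hsub : {y | (∃ w : ι → ℤ, y = fun i => (w i : ℝ)) ∧
      ∀ i : {i // lam i ≠ 0}, (fun j => (v i j : ℝ)) ⬝ᵥ y = 0}
      ⊆ {y | (∃ w : ι → ℤ, y = fun i => (w i : ℝ)) ∧ M *ᵥ y = 0} :=
    fun y hy => ⟨hy.1, (hker y).mpr hy.2⟩
  exact Submodule.span_mono hsub
    (mem_span_intPoints_of_dotProduct_eq_zero (fun i : {i // lam i ≠ 0} => v i) ((hker x).mp hx))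

theorem stmt_19_general (n : ℕ) (M : Matrix (Fin n) (Fin n) ℝ)
    (hpsd : M.PosSemidef) :
    (Submodule.span ℝ {x : Fin n → ℝ | (∃ v : Fin n → ℤ, x = vR v) ∧ M.mulVec x = 0}
        = LinearMap.ker M.mulVecLin) ↔
    (∃ (k : ℕ) (v : Fin k → (Fin n → ℤ)) (lam : Fin k → ℝ),
      (∀ i, 0 ≤ lam i) ∧
      ∀ x : Fin n → ℝ, x ⬝ᵥ M.mulVec x = ∑ i, lam i * (vR (v i) ⬝ᵥ x) ^ 2) := by
  constructor
  · intro hK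
    exact integralSqCone.exists_sum_sq_of_mem (dotProduct_mulVec_mem_integralSqCone hpsd hK)
  · rintro ⟨k, v, lam, hlam, hQ⟩
    exact span_intPoints_eq_ker_of_eq_sum_sq hpsd hlam hQ

/-- A positive semidefinite form has rational kernel (the real span of the
integer points of its kernel is the whole kernel) if and only if it is a
nonnegative real combination of rank-one forms `(v·x)²` with `v ∈ ℤⁿ`. -/
theorem stmt_19 (n : ℕ) (M : Matrix (Fin n) (Fin n) ℝ)
    (hsymm : M.IsSymm) (hpsd : M.PosSemidef) :
    (Submodule.span ℝ {x : Fin n → ℝ | (∃ v : Fin n → ℤ, x = vR v) ∧ M.mulVec x = 0}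
        = LinearMap.ker M.mulVecLin) ↔
    (∃ (k : ℕ) (v : Fin k → (Fin n → ℤ)) (lam : Fin k → ℝ),
      (∀ i, 0 ≤ lam i) ∧
      ∀ x : Fin n → ℝ, x ⬝ᵥ M.mulVec x = ∑ i, lam i * (vR (v i) ⬝ᵥ x) ^ 2) :=
  stmt_19_general n M hpsd
end
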